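/- arXiv:2410.02409 — 2 statements merged into one kernel-verified Lean document; each statement's English description precedes it below -/
import Mathlib

section
/- Let x : ℕ → ℕ be an infinite word taking finitely many values whose additive complexity ρ⁺_x is bounded. Then x contains an additive k-power for every positive integer k: for every k ≥ 1 there exist i ≥ 0 and m ≥ 1 such that the k consecutive length-m blocks x(i+tm)⋯x(i+(t+1)m−1), for t = 0, 1, …, k−1, all have the same letter sum, i.e., ∑_{j<m} x(i+tm+j) = ∑_{j<m} x(i+j) for all t < k. -/
/-- Sum of the letters of the length-`n` factor of `x` starting at position `i`. -/
def blockSum (x : ℕ → ℕ) (i n : ℕ) : ℕ := ∑ j ∈ Finset.range n, x (i + j)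

/-- Additive complexity: the number of distinct letter-sums of length-`n` factors. -/
noncomputable def addComplexity (x : ℕ → ℕ) (n : ℕ) : ℕ :=
  Set.ncard {s : ℕ | ∃ i : ℕ, blockSum x i n = s}

/-- Parikh vector of the length-`n` factor of `x` starting at position `i`. -/
def parikh (x : ℕ → ℕ) (i n : ℕ) : ℕ → ℕ :=
  fun a => ((Finset.range n).filter fun j => x (i + j) = a).card

/-- Abelian complexity: the number of distinct Parikh vectors of length-`n` factors. -/
noncomputable def abComplexity (x : ℕ → ℕ) (n : ℕ) : ℕ :=
  Set.ncard {P : ℕ → ℕ | ∃ i : ℕ, parikh x i n = P}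

/-- `x` is the fixed point of the morphism `f` starting with the letter `a₀`:
`x 0 = a₀` and `x` is the infinite concatenation `f (x 0) f (x 1) f (x 2) ⋯`. -/
def IsFixedPointOf (f : ℕ → List ℕ) (a₀ : ℕ) (x : ℕ → ℕ) : Prop :=
  x 0 = a₀ ∧ ∀ n j, j < (f (x n)).length →
    x ((∑ k ∈ Finset.range n, (f (x k)).length) + j) = (f (x n)).getD j 0

lemma blockSum_split (x : ℕ → ℕ) (i a b : ℕ) :
    blockSum x i (a + b) = blockSum x i a + blockSum x (i + a) b := by
  induction b with
  | zero => simp [blockSum]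
  | succ b ih =>
    have h1 : a + (b + 1) = (a + b) + 1 := rfl
    rw [h1]
    unfold blockSum at *
    rw [Finset.sum_range_succ, ih, Finset.sum_range_succ]
    rw [Nat.add_assoc i a b]; ring

lemma blockSum_step (x : ℕ → ℕ) (i n : ℕ) :
    x i + blockSum x (i + 1) n = blockSum x i n + x (i + n) := by
  have h1 := blockSum_split x i 1 n
  have h2 : blockSum x i (n + 1) = blockSum x i n + x (i + n) := Finset.sum_range_succ _ _
  have h3 : blockSum x i 1 = x i := by simp [blockSum]
  rw [Nat.add_comm 1 n] at h1
  omega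

lemma chain_up {x : ℕ → ℕ} {M : ℕ} (hM : ∀ j, x j ≤ M) (n : ℕ) {v w : ℕ}
    (hv : ∃ i, blockSum x i n = v) (hw : ∃ i, blockSum x i n = w) (hvw : v < w) :
    ∃ u, (∃ i, blockSum x i n = u) ∧ v < u ∧ u ≤ v + M := by
  classical
  obtain ⟨i₀, hi₀⟩ := hv
  obtain ⟨i₁, hi₁⟩ := hw
  have step1 : ∀ i, blockSum x (i + 1) n ≤ blockSum x i n + M := by
    intro i; have h := blockSum_step x i n; have := hM (i + n); omega
  have step2 : ∀ i, blockSum x i n ≤ blockSum x (i + 1) n + M := by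
    intro i; have h := blockSum_step x i n; have := hM i; omega
  rcases le_or_gt i₀ i₁ with h | h
  · have hP : ∃ j, v < blockSum x (i₀ + j) n :=
      ⟨i₁ - i₀, by rw [Nat.add_sub_cancel' h, hi₁]; exact hvw⟩
    have hj := Nat.find_spec hP
    have hj0 : Nat.find hP ≠ 0 := by
      intro h0; rw [h0, Nat.add_zero, hi₀] at hj; exact lt_irrefl v hj
    obtain ⟨j', hj'⟩ := Nat.exists_eq_succ_of_ne_zero hj0
    have hprev : ¬ v < blockSum x (i₀ + j') n := Nat.find_min hP (by omega)
    rw [hj'] at hj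
    have hre : i₀ + (j' + 1) = (i₀ + j') + 1 := rfl
    rw [hre] at hj
    have hstep := step1 (i₀ + j')
    exact ⟨blockSum x ((i₀ + j') + 1) n, ⟨_, rfl⟩, hj, by omega⟩
  · have hP : ∃ j, blockSum x (i₁ + j) n ≤ v :=
      ⟨i₀ - i₁, by rw [Nat.add_sub_cancel' h.le, hi₀]⟩
    have hj := Nat.find_spec hP
    have hj0 : Nat.find hP ≠ 0 := by
      intro h0; rw [h0, Nat.add_zero, hi₁] at hj; omega
    obtain ⟨j', hj'⟩ := Nat.exists_eq_succ_of_ne_zero hj0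
    have hprev : ¬ blockSum x (i₁ + j') n ≤ v := Nat.find_min hP (by omega)
    rw [hj'] at hj
    have hre : i₁ + (j' + 1) = (i₁ + j') + 1 := rfl
    rw [hre] at hj
    have hstep := step2 (i₁ + j')
    exact ⟨blockSum x (i₁ + j') n, ⟨_, rfl⟩, by omega, by omega⟩

lemma gap_aux (T : Finset ℕ) (hT : T.Nonempty) (M : ℕ)
    (hchain : ∀ v ∈ T, v < T.max' hT → ∃ u ∈ T, v < u ∧ u ≤ v + M) :
    T.max' hT ≤ T.min' hT + T.card * M := by
  classical
  have key : ∀ d, ∀ v ∈ T, T.max' hT - v ≤ d →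
      T.max' hT ≤ v + (T.filter fun u => v < u).card * M := by
    intro d
    induction d with
    | zero => intro v hv h0; omega
    | succ d ih =>
      intro v hv hle
      by_cases hcase : v < T.max' hT
      · obtain ⟨u, hu, hvu, huM⟩ := hchain v hv hcase
        have h1 := ih u hu (by omega)
        have hmem : u ∈ T.filter fun w => v < w := Finset.mem_filter.mpr ⟨hu, hvu⟩
        have hnot : u ∉ T.filter fun w => u < w := by simp [Finset.mem_filter]
        have hsubset : (T.filter fun w => u < w) ⊆ (T.filter fun w => v < w) := by
          intro w hw
          rw [Finset.mem_filter] at *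
          exact ⟨hw.1, lt_trans hvu hw.2⟩
        have hcard : (T.filter fun w => u < w).card < (T.filter fun w => v < w).card :=
          Finset.card_lt_card ((Finset.ssubset_iff_of_subset hsubset).mpr ⟨u, hmem, hnot⟩)
        have hmul : ((T.filter fun w => u < w).card + 1) * M ≤
            (T.filter fun w => v < w).card * M := Nat.mul_le_mul_right M hcard
        calc T.max' hT ≤ u + (T.filter fun w => u < w).card * M := h1
          _ ≤ v + M + (T.filter fun w => u < w).card * M := by omega
          _ = v + ((T.filter fun w => u < w).card + 1) * M := by ring
          _ ≤ v + (T.filter fun w => v < w).card * M := by omega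
      · omega
  have h := key (T.max' hT) (T.min' hT) (T.min'_mem hT) (by omega)
  have hc : (T.filter fun u => T.min' hT < u).card ≤ T.card := Finset.card_filter_le _ _
  have := Nat.mul_le_mul_right M hc
  omega

open Classical in
noncomputable def Vfin (x : ℕ → ℕ) (M n : ℕ) : Finset ℕ :=
  (Finset.Iic (n * M)).filter fun s => ∃ i, blockSum x i n = s

lemma blockSum_le {x : ℕ → ℕ} {M : ℕ} (hM : ∀ j, x j ≤ M) (i n : ℕ) :
    blockSum x i n ≤ n * M := by
  calc blockSum x i n ≤ ∑ _j ∈ Finset.range n, M :=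
        Finset.sum_le_sum fun j _ => hM (i + j)
    _ = n * M := by simp [Finset.sum_const, Finset.card_range]

lemma mem_Vfin {x : ℕ → ℕ} {M : ℕ} (hM : ∀ j, x j ≤ M) (i n : ℕ) :
    blockSum x i n ∈ Vfin x M n := by
  classical
  rw [Vfin, Finset.mem_filter, Finset.mem_Iic]
  exact ⟨blockSum_le hM i n, i, rfl⟩

lemma exists_of_mem_Vfin {x : ℕ → ℕ} {M n s : ℕ} (h : s ∈ Vfin x M n) :
    ∃ i, blockSum x i n = s := by
  classical
  rw [Vfin, Finset.mem_filter] at h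
  exact h.2

lemma card_Vfin {x : ℕ → ℕ} {M : ℕ} (hM : ∀ j, x j ≤ M) (n : ℕ) :
    (Vfin x M n).card = addComplexity x n := by
  rw [addComplexity]
  have : {s : ℕ | ∃ i : ℕ, blockSum x i n = s} = ↑(Vfin x M n) := by
    ext s
    constructor
    · rintro ⟨i, rfl⟩; exact mem_Vfin hM i n
    · intro h; exact exists_of_mem_Vfin h
  rw [this, Set.ncard_coe_finset]

lemma floor_close {u v : ℝ} (h : ⌊3 * u⌋ = ⌊3 * v⌋) : |u - v| < 1/3 := by
  have h1 := Int.abs_sub_lt_one_of_floor_eq_floor h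
  rw [show (3:ℝ) * u - 3 * v = 3 * (u - v) by ring, abs_mul] at h1
  rw [show |(3:ℝ)| = 3 by norm_num] at h1
  linarith

lemma nat_eq_of_close {A D : ℕ} (h : |(A : ℝ) - D| < 1) : A = D := by
  have key : |(A:ℤ) - D| < 1 := by exact_mod_cast (by push_cast; exact h :
    ((|(A:ℤ) - D| : ℤ) : ℝ) < 1)
  have := Int.abs_lt_one_iff.mp key
  omega

/-- A word with bounded additive complexity contains additive k-powers for every
k ≥ 1. -/
theorem bounded_additive_complexity_has_additive_powers (x : ℕ → ℕ)
    (hfin : (Set.range x).Finite)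
    (hbdd : ∃ B : ℕ, ∀ n : ℕ, addComplexity x n ≤ B) :
    ∀ k : ℕ, 1 ≤ k → ∃ i m : ℕ, 1 ≤ m ∧
      ∀ t : ℕ, t < k → blockSum x (i + t * m) m = blockSum x i m := by
  classical
  obtain ⟨B, hB⟩ := hbdd
  obtain ⟨Mb, hMb⟩ : ∃ M, ∀ j, x j ≤ M := by
    obtain ⟨M, hM⟩ := hfin.bddAbove
    exact ⟨M, fun j => hM ⟨j, rfl⟩⟩
  intro k hk
  have hne : ∀ n, (Vfin x Mb n).Nonempty := fun n => ⟨_, mem_Vfin hMb 0 n⟩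
  set mn : ℕ → ℕ := fun n => (Vfin x Mb n).min' (hne n) with hmn_def
  set Mx : ℕ → ℕ := fun n => (Vfin x Mb n).max' (hne n) with hMx_def
  have hmin_le : ∀ i n, mn n ≤ blockSum x i n :=
    fun i n => Finset.min'_le _ _ (mem_Vfin hMb i n)
  have hle_max : ∀ i n, blockSum x i n ≤ Mx n :=
    fun i n => Finset.le_max' _ _ (mem_Vfin hMb i n)
  have hminmax : ∀ n, mn n ≤ Mx n := fun n => Finset.min'_le _ _ (Finset.max'_mem _ _)
  -- superadditivity / subadditivity
  have hsuper : ∀ a b, mn a + mn b ≤ mn (a + b) := by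
    intro a b
    apply Finset.le_min'
    intro s hs
    obtain ⟨i, rfl⟩ := exists_of_mem_Vfin hs
    rw [blockSum_split]
    exact Nat.add_le_add (hmin_le i a) (hmin_le (i + a) b)
  have hsub : ∀ a b, Mx (a + b) ≤ Mx a + Mx b := by
    intro a b
    apply Finset.max'_le
    intro s hs
    obtain ⟨i, rfl⟩ := exists_of_mem_Vfin hs
    rw [blockSum_split]
    exact Nat.add_le_add (hle_max i a) (hle_max (i + a) b)
  have hMx0 : Mx 0 = 0 := by
    have h1 : Mx 0 ≤ 0 := by
      apply Finset.max'_le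
      intro s hs
      obtain ⟨i, rfl⟩ := exists_of_mem_Vfin hs
      simp [blockSum]
    omega
  -- iterated versions
  have hiter_min : ∀ c a, c * mn a ≤ mn (c * a) := by
    intro c a
    induction c with
    | zero => simp
    | succ c ih =>
      have : mn (c * a) + mn a ≤ mn (c * a + a) := hsuper (c * a) a
      have he : (c + 1) * a = c * a + a := by ring
      rw [he]
      have : (c + 1) * mn a = c * mn a + mn a := by ring
      omega
  have hiter_max : ∀ c a, Mx (c * a) ≤ c * Mx a := by
    intro c a
    induction c with
    | zero => simp [hMx0]
    | succ c ih =>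
      have h1 : Mx (c * a + a) ≤ Mx (c * a) + Mx a := hsub (c * a) a
      have he : (c + 1) * a = c * a + a := by ring
      rw [he]
      have : (c + 1) * Mx a = c * Mx a + Mx a := by ring
      omega
  -- cross inequality
  have hcross : ∀ a b, b * mn a ≤ a * Mx b := by
    intro a b
    calc b * mn a ≤ mn (b * a) := hiter_min b a
      _ ≤ Mx (b * a) := hminmax _
      _ = Mx (a * b) := by rw [Nat.mul_comm]
      _ ≤ a * Mx b := hiter_max a b
  -- gap bound
  have hgap : ∀ n, Mx n ≤ mn n + B * Mb := by
    intro n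
    have hchain : ∀ v ∈ Vfin x Mb n, v < (Vfin x Mb n).max' (hne n) →
        ∃ u ∈ Vfin x Mb n, v < u ∧ u ≤ v + Mb := by
      intro v hv hlt
      obtain ⟨u, ⟨i, hi⟩, h1, h2⟩ := chain_up hMb n (exists_of_mem_Vfin hv)
        (exists_of_mem_Vfin (Finset.max'_mem _ (hne n))) hlt
      exact ⟨u, by rw [← hi]; exact mem_Vfin hMb i n, h1, h2⟩
    have h := gap_aux (Vfin x Mb n) (hne n) Mb hchain
    have hcard : (Vfin x Mb n).card ≤ B := by rw [card_Vfin hMb]; exact hB n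
    have := Nat.mul_le_mul_right Mb hcard
    simp only [hmn_def, hMx_def]
    omega
  -- the frequency α
  set Q : Set ℝ := {r : ℝ | ∃ n : ℕ, 1 ≤ n ∧ r = (mn n : ℝ) / n} with hQ_def
  have hQne : Q.Nonempty := ⟨(mn 1 : ℝ) / (1 : ℕ), 1, le_refl 1, rfl⟩
  have hQbdd : BddAbove Q := by
    refine ⟨(Mx 1 : ℝ), ?_⟩
    rintro r ⟨n, hn1, rfl⟩
    have h := hcross n 1
    rw [Nat.one_mul] at h
    have hn : (0:ℝ) < n := by exact_mod_cast hn1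
    rw [div_le_iff₀ hn]
    have h' : (mn n : ℝ) ≤ (n * Mx 1 : ℕ) := by exact_mod_cast h
    push_cast at h'
    linarith
  set α : ℝ := sSup Q with hα_def
  have halpha_ge : ∀ n : ℕ, 1 ≤ n → (mn n : ℝ) ≤ α * n := by
    intro n hn1
    have hn : (0:ℝ) < n := by exact_mod_cast hn1
    have hmem : (mn n : ℝ) / n ∈ Q := ⟨n, hn1, rfl⟩
    have h := le_csSup hQbdd hmem
    rw [div_le_iff₀ hn] at h
    linarith
  have halpha_le : ∀ n : ℕ, 1 ≤ n → α * n ≤ (Mx n : ℝ) := by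
    intro n hn1
    have hn : (0:ℝ) < n := by exact_mod_cast hn1
    have h : α ≤ (Mx n : ℝ) / n := by
      apply csSup_le hQne
      rintro r ⟨a, ha1, rfl⟩
      have haa : (0:ℝ) < a := by exact_mod_cast ha1
      rw [div_le_div_iff₀ haa hn]
      have h := hcross a n
      have h' : ((n * mn a : ℕ) : ℝ) ≤ ((a * Mx n : ℕ) : ℝ) := by exact_mod_cast h
      push_cast at h'
      linarith
    rw [le_div_iff₀ hn] at h
    linarith
  -- deviation function
  set e : ℕ → ℝ := fun n => (blockSum x 0 n : ℝ) - α * n with he_def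
  have hebound : ∀ n : ℕ, |e n| ≤ ((B * Mb : ℕ) : ℝ) := by
    intro n
    rcases Nat.eq_zero_or_pos n with rfl | hn1
    · simp [he_def, blockSum]
      positivity
    · have h1 : (mn n : ℝ) ≤ (blockSum x 0 n : ℝ) := by exact_mod_cast hmin_le 0 n
      have h2 : (blockSum x 0 n : ℝ) ≤ (Mx n : ℝ) := by exact_mod_cast hle_max 0 n
      have h3 : (Mx n : ℝ) ≤ (mn n : ℝ) + ((B * Mb : ℕ) : ℝ) := by
        have := hgap n
        have h' : ((Mx n : ℕ) : ℝ) ≤ ((mn n + B * Mb : ℕ) : ℝ) := by exact_mod_cast this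
        push_cast at h' ⊢
        linarith
      have h4 := halpha_ge n hn1
      have h5 := halpha_le n hn1
      rw [abs_le]
      constructor <;> simp only [he_def] <;> linarith
  have hbs : ∀ i m : ℕ, (blockSum x i m : ℝ) = e (i + m) - e i + α * m := by
    intro i m
    have h := blockSum_split x 0 i m
    rw [Nat.zero_add] at h
    have hc : ((blockSum x 0 (i + m) : ℕ) : ℝ)
        = ((blockSum x 0 i : ℕ) : ℝ) + ((blockSum x i m : ℕ) : ℝ) := by exact_mod_cast h
    simp only [he_def]
    push_cast
    linarith
  clear_value α e
  set C0 : ℤ := 3 * ((B * Mb : ℕ) : ℤ) with hC0_def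
  have hcol : ∀ n, ⌊3 * e n⌋ ∈ Finset.Icc (-C0) C0 := by
    intro n
    have hb := abs_le.mp (hebound n)
    push_cast at hb
    rw [Finset.mem_Icc]
    constructor
    · apply Int.le_floor.mpr
      simp only [hC0_def]
      push_cast
      linarith [hb.1]
    · calc ⌊3 * e n⌋ ≤ ⌊((C0 : ℤ) : ℝ)⌋ := by
            apply Int.floor_le_floor
            simp only [hC0_def]
            push_cast
            linarith [hb.2]
        _ = C0 := Int.floor_intCast C0
  set col : ℕ → {z : ℤ // z ∈ Finset.Icc (-C0) C0} := fun n => ⟨⌊3 * e n⌋, hcol n⟩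
    with hcol_def
  obtain ⟨a, ha, b, c, hmono⟩ :=
    Combinatorics.exists_mono_homothetic_copy (M := ℕ) (Finset.range (k + 1)) col
  refine ⟨b, a, ha, ?_⟩
  intro t ht
  have hdiff : ∀ p q : ℕ, col p = col q → |e p - e q| < 1/3 := by
    intro p q h
    apply floor_close
    have := congrArg Subtype.val h
    simpa [hcol_def] using this
  have hpos : ∀ s ∈ Finset.range (k + 1), col (a * s + b) = c := by
    intro s hs
    have := hmono s hs
    rwa [smul_eq_mul] at this
  have h0 := hpos 0 (Finset.mem_range.mpr (by omega))
  have h1 := hpos 1 (Finset.mem_range.mpr (by omega))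
  have h2 := hpos t (Finset.mem_range.mpr (by omega))
  have h3 := hpos (t + 1) (Finset.mem_range.mpr (by omega))
  have d1 : |e (a * (t + 1) + b) - e (a * 1 + b)| < 1/3 := hdiff _ _ (h3.trans h1.symm)
  have d2 : |e (a * t + b) - e (a * 0 + b)| < 1/3 := hdiff _ _ (h2.trans h0.symm)
  apply nat_eq_of_close
  rw [hbs (b + t * a) a, hbs b a]
  simp only [Nat.mul_one, Nat.mul_zero, Nat.zero_add] at d1 d2
  rw [show b + t * a + a = a * (t + 1) + b from by ring,
    show b + t * a = a * t + b from by ring,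
    show b + a = a + b from by ring]
  rw [abs_lt] at d1 d2
  obtain ⟨d1a, d1b⟩ := d1
  obtain ⟨d2a, d2b⟩ := d2
  rw [abs_lt]
  constructor
  · linarith only [d1a, d1b, d2a, d2b]
  · linarith only [d1a, d1b, d2a, d2b]
end

section
/- Let f : ℕ → ℕ be the Fibonacci word, i.e., the fixed point starting with 0 of the morphism 0→01, 1→0, and let φ = (1+√5)/2 be the golden ratio. For all integers k ≥ 1 and n ≥ 1, the word f contains an abelian k-power of order n (i.e., there exists i ≥ 0 such that the k consecutive length-n blocks f(i+tn)⋯f(i+(t+1)n−1), t = 0, …, k−1, all have the same Parikh vector) if and only if ⌊kφn⌋ ≡ 0 (mod k) or ⌊kφn⌋ ≡ −1 (mod k). -/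
/-- The Fibonacci morphism 0→01, 1→0. -/
def fibMorphism : ℕ → List ℕ :=
  fun a => if a = 0 then [0, 1] else [0]

/-- The golden ratio (1 + √5)/2. -/
noncomputable def goldenRat : ℝ := (1 + Real.sqrt 5) / 2

/-!
The Fibonacci word is the mechanical word `m ↦ ⌊(m + 2)β⌋ - ⌊(m + 1)β⌋` of slope `β = 2 - φ`:
since `β² = 3β - 1` this word is a fixed point of `0 ↦ 01, 1 ↦ 0`, and that fixed point is unique.
Parikh vectors of a binary word are determined by letter sums, and for a mechanical word of slope
`α` and intercept `ρ` the sum over `[i + tn, i + (t + 1)n)` is `⌊(t + 1)nα + yᵢ⌋ - ⌊tnα + yᵢ⌋`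
with `yᵢ = fract (iα + ρ)`. So an abelian `k`-power of order `n` starts at `i` iff `t ↦ ⌊tnα + yᵢ⌋`
is linear on `0, …, k`. Then `k` divides `⌊knα + yᵢ⌋ ∈ {⌊knα⌋, ⌊knα⌋ + 1}`. Conversely, if
`⌊knα⌋ ≡ 0` or `-1 (mod k)`, linearity holds for all `y` in a nonempty interval, and some `yᵢ` lies
in it because `α` is irrational. Finally `⌊knβ⌋ + ⌊knφ⌋ = 2kn - 1` exchanges the two residues.
-/

section FixedPoint

variable {f : ℕ → List ℕ} {a₀ : ℕ} {x y : ℕ → ℕ}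

lemma exists_eq_sum_range_add_of_lt_sum_range (u : ℕ → ℕ) {N m : ℕ}
    (hm : m < ∑ k ∈ Finset.range N, u k) :
    ∃ n < N, ∃ j < u n, m = ∑ k ∈ Finset.range n, u k + j := by
  induction N with
  | zero => simp at hm
  | succ N ih =>
    by_cases h : m < ∑ k ∈ Finset.range N, u k
    · obtain ⟨n, hn, j, hj, rfl⟩ := ih h
      exact ⟨n, by omega, j, hj, rfl⟩
    · rw [Finset.sum_range_succ] at hm
      exact ⟨N, by omega, m - ∑ k ∈ Finset.range N, u k, by omega, by omega⟩

lemma IsFixedPointOf.eq_of_eq_on_prefix (hx : IsFixedPointOf f a₀ x) (hy : IsFixedPointOf f a₀ y)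
    {N : ℕ} (h : ∀ k < N, x k = y k) {m : ℕ}
    (hm : m < ∑ k ∈ Finset.range N, (f (x k)).length) : x m = y m := by
  obtain ⟨n, hn, j, hj, rfl⟩ := exists_eq_sum_range_add_of_lt_sum_range _ hm
  have hlen : ∑ k ∈ Finset.range n, (f (x k)).length = ∑ k ∈ Finset.range n, (f (y k)).length :=
    Finset.sum_congr rfl fun k hk => by rw [h k (by simp at hk; omega)]
  rw [hx.2 n j hj, hlen, hy.2 n j (by rwa [← h n hn]), h n hn]

theorem IsFixedPointOf.unique (hf : ∀ a, f a ≠ []) (h₀ : 2 ≤ (f a₀).length)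
    (hx : IsFixedPointOf f a₀ x) (hy : IsFixedPointOf f a₀ y) : x = y := by
  have hgrow (N : ℕ) : N + 2 ≤ ∑ k ∈ Finset.range (N + 1), (f (x k)).length := by
    have hpos : N ≤ ∑ k ∈ Finset.range N, (f (x (k + 1))).length := by
      simpa using Finset.card_nsmul_le_sum (Finset.range N) (fun k => (f (x (k + 1))).length) 1
        fun k _ => List.length_pos_iff.2 (hf _)
    rw [Finset.sum_range_succ', hx.1]
    omega
  have hprefix (N : ℕ) : ∀ k < N + 1, x k = y k := by
    induction N with
    | zero =>
      intro k hk
      obtain rfl : k = 0 := by omega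
      rw [hx.1, hy.1]
    | succ N ih => exact fun k hk => hx.eq_of_eq_on_prefix hy ih (by have := hgrow N; omega)
  funext m
  exact hprefix m m (by omega)

end FixedPoint

section BinaryWord

variable {x : ℕ → ℕ}

lemma parikh_one_eq_blockSum (hx : ∀ m, x m ≤ 1) (i n : ℕ) :
    parikh x i n 1 = blockSum x i n := by
  rw [parikh, blockSum, Finset.card_filter]
  refine Finset.sum_congr rfl fun j _ => ?_
  rcases Nat.le_one_iff_eq_zero_or_eq_one.1 (hx (i + j)) with h | h <;> simp [h]

lemma parikh_zero_add_parikh_one (hx : ∀ m, x m ≤ 1) (i n : ℕ) :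
    parikh x i n 0 + parikh x i n 1 = n := by
  have hone : (Finset.range n).filter (fun j => x (i + j) = 1)
      = (Finset.range n).filter (fun j => ¬ x (i + j) = 0) :=
    Finset.filter_congr fun j _ => by have := hx (i + j); omega
  rw [parikh, parikh, hone, Finset.card_filter_add_card_filter_not, Finset.card_range]

lemma parikh_eq_zero_of_two_le (hx : ∀ m, x m ≤ 1) (i n : ℕ) {a : ℕ} (ha : 2 ≤ a) :
    parikh x i n a = 0 := by
  rw [parikh, Finset.card_eq_zero, Finset.filter_eq_empty_iff]
  intro j _
  have := hx (i + j)
  omega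

lemma parikh_eq_parikh_iff (hx : ∀ m, x m ≤ 1) (i i' n : ℕ) :
    parikh x i n = parikh x i' n ↔ blockSum x i n = blockSum x i' n := by
  refine ⟨fun h => ?_, fun h => funext fun a => ?_⟩
  · rw [← parikh_one_eq_blockSum hx, ← parikh_one_eq_blockSum hx, h]
  · match a with
    | 0 =>
      have := parikh_zero_add_parikh_one hx i n
      have := parikh_zero_add_parikh_one hx i' n
      rw [parikh_one_eq_blockSum hx] at *
      omega
    | 1 => rw [parikh_one_eq_blockSum hx, parikh_one_eq_blockSum hx, h]
    | a + 2 => rw [parikh_eq_zero_of_two_le hx _ _ (by omega),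
        parikh_eq_zero_of_two_le hx _ _ (by omega)]

end BinaryWord

lemma forall_sub_eq_iff_exists_forall_eq_mul {D : ℕ → ℤ} (h₀ : D 0 = 0) (k : ℕ) :
    (∀ t < k, D (t + 1) - D t = D 1) ↔ ∃ s : ℤ, ∀ t ≤ k, D t = t * s := by
  constructor
  · intro h
    refine ⟨D 1, fun t ht => ?_⟩
    induction t with
    | zero => simp [h₀]
    | succ t ih =>
      have := h t (by omega)
      rw [ih (by omega)] at this
      push_cast
      linarith
  · rintro ⟨s, hs⟩ t ht
    rw [hs t ht.le, hs (t + 1) ht, hs 1 (by omega)]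
    push_cast
    ring

lemma Int.floor_add_eq_floor_add_fract_add_floor {R : Type*} [Ring R] [LinearOrder R]
    [FloorRing R] [IsOrderedRing R] (a b : R) : ⌊a + b⌋ = ⌊a + Int.fract b⌋ + ⌊b⌋ := by
  rw [← Int.floor_add_intCast, add_assoc, Int.fract_add_floor]

lemma floor_intCast_sub_add_floor {x : ℝ} (hx : Irrational x) (z : ℤ) :
    ⌊(z : ℝ) - x⌋ + ⌊x⌋ = z - 1 := by
  rw [sub_eq_add_neg, Int.floor_intCast_add, Int.floor_neg,
    (Int.ceil_eq_floor_add_one_iff_notMem x).2 fun ⟨m, hm⟩ => hx.ne_int m hm.symm]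
  ring

lemma dvd_floor_or_dvd_floor_add_one_of_dvd_floor_add {k : ℤ} {x y : ℝ} (hy₀ : 0 ≤ y)
    (hy₁ : y < 1) (h : k ∣ ⌊x + y⌋) : k ∣ ⌊x⌋ ∨ k ∣ ⌊x⌋ + 1 := by
  have hle : ⌊x⌋ ≤ ⌊x + y⌋ := Int.floor_mono (by linarith)
  have hlt : ⌊x + y⌋ ≤ ⌊x⌋ + 1 := by
    rw [← Int.floor_add_one]
    exact Int.floor_mono (by linarith)
  rcases (show ⌊x + y⌋ = ⌊x⌋ ∨ ⌊x + y⌋ = ⌊x⌋ + 1 by omega) with e | e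
  · exact .inl (e ▸ h)
  · exact .inr (e ▸ h)

lemma dvd_or_dvd_add_one_iff_of_dvd_add_add_one {k a b : ℤ} (h : k ∣ a + b + 1) :
    (k ∣ a ∨ k ∣ a + 1) ↔ (k ∣ b ∨ k ∣ b + 1) := by
  have h₁ : k ∣ a + (b + 1) := by rwa [← add_assoc]
  have h₂ : k ∣ a + 1 + b := by rwa [add_right_comm]
  rw [or_comm (a := k ∣ b)]
  exact or_congr ⟨fun ha => (dvd_add_right ha).1 h₁, fun hb => (dvd_add_left hb).1 h₁⟩
    ⟨fun ha => (dvd_add_right ha).1 h₂, fun hb => (dvd_add_left hb).1 h₂⟩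

section FloorLinear

variable {γ y : ℝ} {k t : ℕ}

lemma natCast_mul_eq_intCast_add_mul_fract (γ : ℝ) (t : ℕ) :
    (t : ℝ) * γ = ((t * ⌊γ⌋ : ℤ) : ℝ) + t * Int.fract γ := by
  rw [Int.fract]
  push_cast
  ring

lemma floor_natCast_mul_add_of_lt (ht : t ≤ k) (hy₀ : 0 ≤ y) (hy : y < 1 - k * Int.fract γ) :
    ⌊(t : ℝ) * γ + y⌋ = t * ⌊γ⌋ := by
  have htk : (t : ℝ) * Int.fract γ ≤ k * Int.fract γ := by gcongr
  rw [natCast_mul_eq_intCast_add_mul_fract, add_assoc, Int.floor_intCast_add, add_eq_left,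
    Int.floor_eq_zero_iff]
  constructor <;> nlinarith [Int.fract_nonneg γ]

lemma floor_natCast_mul_add_of_gt (ht : t ≤ k) (hy : k * (1 - Int.fract γ) < y) (hy₁ : y < 1) :
    ⌊(t : ℝ) * γ + y⌋ = t * (⌊γ⌋ + 1) := by
  have htk : (t : ℝ) * (1 - Int.fract γ) ≤ k * (1 - Int.fract γ) := by
    gcongr
    linarith [Int.fract_lt_one γ]
  have e : (t : ℝ) * γ + y = ((t * (⌊γ⌋ + 1) : ℤ) : ℝ) + (y - t * (1 - Int.fract γ)) := by
    rw [natCast_mul_eq_intCast_add_mul_fract]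
    push_cast
    ring
  rw [e, Int.floor_intCast_add, add_eq_left, Int.floor_eq_zero_iff]
  constructor <;> nlinarith [Int.fract_lt_one γ]

lemma exists_Ioo_forall_floor_natCast_mul_add_eq_mul (hk : 1 ≤ k) (hγ : Irrational γ)
    (h : (k : ℤ) ∣ ⌊k * γ⌋ ∨ (k : ℤ) ∣ ⌊k * γ⌋ + 1) :
    ∃ a b : ℝ, 0 ≤ a ∧ a < b ∧ b ≤ 1 ∧
      ∀ y ∈ Set.Ioo a b, ∃ s : ℤ, ∀ t ≤ k, ⌊(t : ℝ) * γ + y⌋ = t * s := by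
  have hkR : (1 : ℝ) ≤ k := by exact_mod_cast hk
  have hθ₀ := Int.fract_nonneg γ
  have hθ₁ := Int.fract_lt_one γ
  have hsplit : ⌊(k : ℝ) * γ⌋ = k * ⌊γ⌋ + ⌊k * Int.fract γ⌋ := by
    rw [natCast_mul_eq_intCast_add_mul_fract, Int.floor_intCast_add]
  have hlo : 0 ≤ ⌊k * Int.fract γ⌋ := Int.floor_nonneg.2 (by positivity)
  have hhi : ⌊k * Int.fract γ⌋ < k := Int.floor_lt.2 (by push_cast; nlinarith)
  -- `⌊kγ⌋ ≡ ⌊k · fract γ⌋ ∈ [0, k)`, so the two cases are `k · fract γ < 1` and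
  -- `k · fract γ > k - 1`.
  rw [hsplit, add_assoc, dvd_add_right (dvd_mul_right _ _),
    dvd_add_right (dvd_mul_right _ _)] at h
  rcases h with h | h
  · have hzero : ⌊k * Int.fract γ⌋ = 0 := Int.eq_zero_of_dvd_of_nonneg_of_lt hlo hhi h
    have hsmall : (k : ℝ) * Int.fract γ < 1 := by
      simpa using (Int.floor_eq_zero_iff.1 hzero).2
    exact ⟨0, 1 - k * Int.fract γ, le_rfl, by linarith, by nlinarith,
      fun y hy => ⟨⌊γ⌋, fun t ht => floor_natCast_mul_add_of_lt ht hy.1.le hy.2⟩⟩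
  · have hlast : ⌊k * Int.fract γ⌋ = k - 1 := by
      have := Int.eq_zero_of_dvd_of_nonneg_of_lt (by omega) (by omega)
        (dvd_sub (dvd_refl (k : ℤ)) h)
      omega
    have hne : (k : ℝ) * Int.fract γ ≠ ((k - 1 : ℤ) : ℝ) :=
      ((hγ.sub_intCast ⌊γ⌋).natCast_mul (by omega)).ne_int _
    have hlarge : (k : ℝ) - 1 < k * Int.fract γ := by
      have := Int.floor_le ((k : ℝ) * Int.fract γ)
      rw [hlast] at this
      push_cast at this hne
      exact lt_of_le_of_ne this hne.symm
    exact ⟨k * (1 - Int.fract γ), 1, by nlinarith, by linarith, le_rfl,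
      fun y hy => ⟨⌊γ⌋ + 1, fun t ht => floor_natCast_mul_add_of_gt ht hy.1 hy.2⟩⟩

end FloorLinear

lemma exists_nat_add_mul_mem_Ioo {y c d δ : ℝ} (hδ : 0 < δ) (hδd : δ < d - c) (hy : y ≤ c) :
    ∃ j : ℕ, y + j * δ ∈ Set.Ioo c d := by
  have h₁ := Nat.lt_floor_add_one ((c - y) / δ)
  have h₂ := Nat.floor_le (div_nonneg (sub_nonneg.2 hy) hδ.le)
  rw [div_lt_iff₀ hδ] at h₁
  rw [le_div_iff₀ hδ] at h₂
  refine ⟨⌊(c - y) / δ⌋₊ + 1, ?_, ?_⟩ <;> push_cast <;> nlinarith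

lemma Int.fract_mem_Ioo_of_sub_mem_Ioo {x a b : ℝ} (z : ℤ) (h : x - z ∈ Set.Ioo a b)
    (ha : 0 ≤ a) (hb : b ≤ 1) : Int.fract x ∈ Set.Ioo a b := by
  rwa [(Int.fract_eq_iff (b := x - z)).2 ⟨by linarith [h.1], by linarith [h.2], z, by ring⟩]

lemma exists_nat_fract_add_mul_mem_Ioo {δ a b : ℝ} (hδ : δ ≠ 0) (hδab : |δ| < b - a)
    (ha : 0 ≤ a) (hb : b ≤ 1) (y : ℝ) : ∃ j : ℕ, Int.fract (y + j * δ) ∈ Set.Ioo a b := by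
  rcases hδ.lt_or_gt with hneg | hpos
  · rw [abs_of_neg hneg] at hδab
    obtain ⟨j, hj⟩ := exists_nat_add_mul_mem_Ioo (y := -y) (c := -(⌊y⌋ - 1 + b))
      (d := -(⌊y⌋ - 1 + a)) (neg_pos.2 hneg) (by linarith) (by linarith [Int.floor_le y])
    refine ⟨j, Int.fract_mem_Ioo_of_sub_mem_Ioo (⌊y⌋ - 1) ?_ ha hb⟩
    push_cast
    constructor <;> linarith [hj.1, hj.2]
  · rw [abs_of_pos hpos] at hδab
    obtain ⟨j, hj⟩ := exists_nat_add_mul_mem_Ioo (y := y) (c := ⌊y⌋ + 1 + a)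
      (d := ⌊y⌋ + 1 + b) hpos (by linarith) (by linarith [Int.lt_floor_add_one y])
    refine ⟨j, Int.fract_mem_Ioo_of_sub_mem_Ioo (⌊y⌋ + 1) ?_ ha hb⟩
    push_cast
    constructor <;> linarith [hj.1, hj.2]

lemma exists_nat_fract_mul_add_mem_Ioo {α : ℝ} (hα : Irrational α) (ρ : ℝ) {a b : ℝ}
    (ha : 0 ≤ a) (hab : a < b) (hb : b ≤ 1) : ∃ i : ℕ, Int.fract (i * α + ρ) ∈ Set.Ioo a b := by
  -- Dirichlet: `mα` is within `b - a`, but not `0`, of an integer; steps of `m` then move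
  -- `fract (iα + ρ)` by less than the length of the interval.
  obtain ⟨N, hN⟩ := exists_nat_one_div_lt (sub_pos.2 hab)
  obtain ⟨m, hm, -, hδ⟩ := Real.exists_nat_abs_mul_sub_round_le α (n := N + 1) N.succ_pos
  have hδab : |m * α - round (m * α)| < b - a := calc
    _ ≤ 1 / ((N + 1 : ℕ) + 1 : ℝ) := hδ
    _ ≤ 1 / (N + 1) := by gcongr; linarith
    _ < b - a := hN
  have hδ₀ : (m : ℝ) * α - round (m * α) ≠ 0 :=
    sub_ne_zero.2 ((hα.natCast_mul hm.ne').ne_int _)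
  obtain ⟨j, hj⟩ := exists_nat_fract_add_mul_mem_Ioo hδ₀ hδab ha hb ρ
  refine ⟨j * m, ?_⟩
  have e : ((j * m : ℕ) : ℝ) * α + ρ =
      ρ + j * (m * α - round (m * α)) + ((j * round (m * α) : ℤ) : ℝ) := by
    push_cast
    ring
  rwa [e, Int.fract_add_intCast]

noncomputable def mechanicalWord (α ρ : ℝ) (m : ℕ) : ℕ :=
  (⌊((m + 1 : ℕ) : ℝ) * α + ρ⌋ - ⌊(m : ℝ) * α + ρ⌋).toNat

section MechanicalWord

variable {α : ℝ} (ρ : ℝ)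

lemma mechanicalWord_cast (hα : 0 ≤ α) (m : ℕ) :
    (mechanicalWord α ρ m : ℤ) = ⌊((m + 1 : ℕ) : ℝ) * α + ρ⌋ - ⌊(m : ℝ) * α + ρ⌋ :=
  Int.toNat_of_nonneg <| sub_nonneg.2 <| Int.floor_mono <| by push_cast; nlinarith

lemma mechanicalWord_le_one (hα : α ≤ 1) (m : ℕ) : mechanicalWord α ρ m ≤ 1 := by
  have h : ⌊((m + 1 : ℕ) : ℝ) * α + ρ⌋ ≤ ⌊(m : ℝ) * α + ρ⌋ + 1 := by
    rw [← Int.floor_add_one]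
    exact Int.floor_mono (by push_cast; linarith)
  rw [mechanicalWord]
  omega

lemma blockSum_mechanicalWord (hα : 0 ≤ α) (i n : ℕ) :
    (blockSum (mechanicalWord α ρ) i n : ℤ) = ⌊((i + n : ℕ) : ℝ) * α + ρ⌋ - ⌊(i : ℝ) * α + ρ⌋ := by
  have := Finset.sum_range_sub (fun j => ⌊((i + j : ℕ) : ℝ) * α + ρ⌋) n
  simp only [add_zero, ← add_assoc] at this
  rw [blockSum, Nat.cast_sum, ← this]
  simp_rw [mechanicalWord_cast ρ hα]

lemma blockSum_mechanicalWord_add_mul (hα : 0 ≤ α) (i t n : ℕ) :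
    (blockSum (mechanicalWord α ρ) (i + t * n) n : ℤ) =
      ⌊((t + 1 : ℕ) : ℝ) * (n * α) + Int.fract (i * α + ρ)⌋ -
        ⌊(t : ℝ) * (n * α) + Int.fract (i * α + ρ)⌋ := by
  have hpos (s : ℕ) : ((i + s * n : ℕ) : ℝ) * α + ρ = (s : ℝ) * (n * α) + (i * α + ρ) := by
    push_cast; ring
  rw [blockSum_mechanicalWord ρ hα, show i + t * n + n = i + (t + 1) * n by ring, hpos, hpos,
    Int.floor_add_eq_floor_add_fract_add_floor,
    Int.floor_add_eq_floor_add_fract_add_floor ((t : ℝ) * _)]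
  ring

end MechanicalWord

lemma mechanicalWord_abelianPower_iff {α : ℝ} (ρ : ℝ) (hα₀ : 0 ≤ α) (hα₁ : α ≤ 1) (i k n : ℕ) :
    (∀ t < k, parikh (mechanicalWord α ρ) (i + t * n) n = parikh (mechanicalWord α ρ) i n) ↔
      ∃ s : ℤ, ∀ t ≤ k, ⌊(t : ℝ) * (n * α) + Int.fract (i * α + ρ)⌋ = t * s := by
  set D : ℕ → ℤ := fun t => ⌊(t : ℝ) * (n * α) + Int.fract (i * α + ρ)⌋ with hD
  have hblock (t : ℕ) : (blockSum (mechanicalWord α ρ) (i + t * n) n : ℤ) = D (t + 1) - D t :=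
    blockSum_mechanicalWord_add_mul ρ hα₀ i t n
  have hD₀ : D 0 = 0 := by simp [hD, Int.floor_fract]
  have hblock₀ : (blockSum (mechanicalWord α ρ) i n : ℤ) = D 1 := by simpa [hD₀] using hblock 0
  rw [← forall_sub_eq_iff_exists_forall_eq_mul hD₀]
  refine forall₂_congr fun t _ => ?_
  rw [parikh_eq_parikh_iff (mechanicalWord_le_one ρ hα₁), ← Nat.cast_inj (R := ℤ), hblock,
    hblock₀]

theorem exists_abelianPower_mechanicalWord_iff {α : ℝ} (hα : Irrational α) (hα₀ : 0 ≤ α)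
    (hα₁ : α ≤ 1) (ρ : ℝ) {k n : ℕ} (hk : 1 ≤ k) (hn : n ≠ 0) :
    (∃ i, ∀ t < k, parikh (mechanicalWord α ρ) (i + t * n) n = parikh (mechanicalWord α ρ) i n) ↔
      (k : ℤ) ∣ ⌊k * (n * α)⌋ ∨ (k : ℤ) ∣ ⌊k * (n * α)⌋ + 1 := by
  simp_rw [mechanicalWord_abelianPower_iff ρ hα₀ hα₁]
  constructor
  · rintro ⟨i, s, hs⟩
    exact dvd_floor_or_dvd_floor_add_one_of_dvd_floor_add (Int.fract_nonneg _)
      (Int.fract_lt_one _) ⟨s, hs k le_rfl⟩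
  · intro h
    obtain ⟨a, b, ha, hab, hb, hlin⟩ :=
      exists_Ioo_forall_floor_natCast_mul_add_eq_mul hk (hα.natCast_mul hn) h
    obtain ⟨i, hi⟩ := exists_nat_fract_mul_add_mem_Ioo hα ρ ha hab hb
    exact ⟨i, hlin _ hi⟩

noncomputable def fibSlope : ℝ := 2 - goldenRat

lemma fibSlope_pos : 0 < fibSlope := sub_pos.2 Real.goldenRatio_lt_two

lemma fibSlope_lt_one : fibSlope < 1 := by
  show 2 - Real.goldenRatio < 1
  linarith [Real.one_lt_goldenRatio]

lemma fibSlope_sq : fibSlope ^ 2 = 3 * fibSlope - 1 := by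
  show (2 - Real.goldenRatio) ^ 2 = 3 * (2 - Real.goldenRatio) - 1
  linear_combination Real.goldenRatio_sq

lemma irrational_fibSlope : Irrational fibSlope := by
  show Irrational (2 - Real.goldenRatio)
  simpa using Real.goldenRatio_irrational.natCast_sub 2

noncomputable def fibWord : ℕ → ℕ := mechanicalWord fibSlope fibSlope

section FibonacciWord

local notation "β" => fibSlope

lemma fibWord_cast (m : ℕ) : (fibWord m : ℤ) = ⌊((m + 1 : ℕ) : ℝ) * β + β⌋ - ⌊(m : ℝ) * β + β⌋ :=
  mechanicalWord_cast _ fibSlope_pos.le m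

lemma fibWord_le_one (m : ℕ) : fibWord m ≤ 1 := mechanicalWord_le_one _ fibSlope_lt_one.le m

lemma fibWord_eq_zero_iff (m : ℕ) : fibWord m = 0 ↔ Int.fract ((m : ℝ) * β + β) < 1 - β := by
  have e : ((m + 1 : ℕ) : ℝ) * β + β = β + ((m : ℝ) * β + β) := by push_cast; ring
  rw [← Nat.cast_inj (R := ℤ), fibWord_cast, e, Int.floor_add_eq_floor_add_fract_add_floor,
    Nat.cast_zero, add_sub_cancel_right, Int.floor_eq_zero_iff]
  constructor
  · exact fun h => by linarith [h.2]
  · exact fun h => ⟨by linarith [fibSlope_pos, Int.fract_nonneg ((m : ℝ) * β + β)], by linarith⟩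

lemma fract_fibSlope_pos (m : ℕ) : 0 < Int.fract ((m : ℝ) * β + β) := by
  have hirr : Irrational ((m : ℝ) * β + β) := by
    simpa [add_one_mul] using irrational_fibSlope.natCast_mul (m := m + 1) (by omega)
  exact Int.fract_pos.2 fun h => hirr.ne_int _ h

lemma cast_sum_length_fibMorphism_fibWord (n : ℕ) :
    ((∑ k ∈ Finset.range n, (fibMorphism (fibWord k)).length : ℕ) : ℤ) =
      2 * n - ⌊(n : ℝ) * β + β⌋ := by
  have hlen (m : ℕ) : ((fibMorphism (fibWord m)).length : ℤ) = 2 - fibWord m := by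
    rcases Nat.le_one_iff_eq_zero_or_eq_one.1 (fibWord_le_one m) with h | h <;>
      simp [h, fibMorphism]
  have hsum := blockSum_mechanicalWord fibSlope fibSlope_pos.le 0 n
  have hβ : ⌊β⌋ = 0 := Int.floor_eq_zero_iff.2 ⟨fibSlope_pos.le, fibSlope_lt_one⟩
  simp only [blockSum, zero_add, Nat.cast_zero, zero_mul, hβ, sub_zero] at hsum
  push_cast [hlen, Finset.sum_sub_distrib]
  push_cast at hsum
  rw [← hsum, Finset.sum_const, Finset.card_range, nsmul_eq_mul, mul_comm]
  rfl

lemma floor_sum_length_fibMorphism_add (n r : ℕ) :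
    ⌊((∑ k ∈ Finset.range n, (fibMorphism (fibWord k)).length + r : ℕ) : ℝ) * β + β⌋ =
      n - ⌊(n : ℝ) * β + β⌋ +
        ⌊1 + (r - 1) * β - Int.fract ((n : ℝ) * β + β) * (1 - β)⌋ := by
  have hL : ((∑ k ∈ Finset.range n, (fibMorphism (fibWord k)).length : ℕ) : ℝ) =
      2 * n - ⌊(n : ℝ) * β + β⌋ := by
    exact_mod_cast cast_sum_length_fibMorphism_fibWord n
  have e : ((∑ k ∈ Finset.range n, (fibMorphism (fibWord k)).length + r : ℕ) : ℝ) * β + β =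
      ((n - ⌊(n : ℝ) * β + β⌋ : ℤ) : ℝ) +
        (1 + (r - 1) * β - Int.fract ((n : ℝ) * β + β) * (1 - β)) := by
    rw [Nat.cast_add, hL, Int.fract]
    push_cast
    linear_combination (-(n + 1) : ℝ) * fibSlope_sq
  rw [e, Int.floor_intCast_add]

lemma floor_sum_length_fibMorphism_add_of_le_one (n : ℕ) {r : ℕ} (hr : r ≤ 1) :
    ⌊((∑ k ∈ Finset.range n, (fibMorphism (fibWord k)).length + r : ℕ) : ℝ) * β + β⌋ =
      n - ⌊(n : ℝ) * β + β⌋ := by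
  have hu₀ := fract_fibSlope_pos n
  have hu₁ := Int.fract_lt_one ((n : ℝ) * β + β)
  have hβ₀ := fibSlope_pos
  have hβ₁ := fibSlope_lt_one
  have hr' : (r : ℝ) ≤ 1 := by exact_mod_cast hr
  have e : ⌊1 + (r - 1) * β - Int.fract ((n : ℝ) * β + β) * (1 - β)⌋ = 0 :=
    Int.floor_eq_zero_iff.2 ⟨by nlinarith [r.cast_nonneg (α := ℝ)], by nlinarith⟩
  rw [floor_sum_length_fibMorphism_add, e, add_zero]

lemma fibWord_sum_length (n : ℕ) :
    fibWord (∑ k ∈ Finset.range n, (fibMorphism (fibWord k)).length) = 0 := by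
  have h₀ := floor_sum_length_fibMorphism_add_of_le_one n zero_le_one
  rw [Nat.add_zero] at h₀
  rw [← Nat.cast_inj (R := ℤ), fibWord_cast, floor_sum_length_fibMorphism_add_of_le_one n le_rfl,
    h₀, Nat.cast_zero, sub_self]

lemma fibWord_sum_length_add_one {n : ℕ} (h : fibWord n = 0) :
    fibWord (∑ k ∈ Finset.range n, (fibMorphism (fibWord k)).length + 1) = 1 := by
  have hu₀ := fract_fibSlope_pos n
  have hu := (fibWord_eq_zero_iff n).1 h
  have hβ₀ := fibSlope_pos
  have hβ₁ := fibSlope_lt_one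
  have hβ₂ := fibSlope_sq
  have e₂ : ⌊1 + ((2 : ℕ) - 1) * β - Int.fract ((n : ℝ) * β + β) * (1 - β)⌋ = 1 :=
    Int.floor_eq_iff.2 ⟨by push_cast; nlinarith, by push_cast; nlinarith⟩
  set L := ∑ k ∈ Finset.range n, (fibMorphism (fibWord k)).length
  rw [← Nat.cast_inj (R := ℤ), fibWord_cast, show L + 1 + 1 = L + 2 by omega,
    floor_sum_length_fibMorphism_add, e₂, floor_sum_length_fibMorphism_add_of_le_one n le_rfl]
  push_cast
  ring

theorem fibWord_isFixedPoint : IsFixedPointOf fibMorphism 0 fibWord := by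
  have hf₀ : fibMorphism 0 = [0, 1] := rfl
  have hf₁ : fibMorphism 1 = [0] := rfl
  refine ⟨by simpa using fibWord_sum_length 0, fun n j hj => ?_⟩
  rcases Nat.le_one_iff_eq_zero_or_eq_one.1 (fibWord_le_one n) with h | h
  · rw [h, hf₀] at hj ⊢
    replace hj : j < 2 := hj
    interval_cases j
    · simpa using fibWord_sum_length n
    · simpa using fibWord_sum_length_add_one h
  · rw [h, hf₁] at hj ⊢
    obtain rfl : j = 0 := by simpa using hj
    simpa using fibWord_sum_length n

end FibonacciWord

/-- The Fibonacci word has an abelian k-power of order n if and only if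
⌊kφn⌋ ≡ 0 or −1 (mod k). -/
theorem fibonacci_abelian_powers (x : ℕ → ℕ)
    (hx : IsFixedPointOf fibMorphism 0 x) (k n : ℕ) (hk : 1 ≤ k) (hn : 1 ≤ n) :
    (∃ i : ℕ, ∀ t : ℕ, t < k → parikh x (i + t * n) n = parikh x i n) ↔
    ((k : ℤ) ∣ ⌊(k : ℝ) * goldenRat * (n : ℝ)⌋ ∨
     (k : ℤ) ∣ (⌊(k : ℝ) * goldenRat * (n : ℝ)⌋ + 1)) := by
  obtain rfl : x = fibWord :=
    hx.unique (fun a => by unfold fibMorphism; split <;> simp) (by decide) fibWord_isFixedPoint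
  rw [fibWord, exists_abelianPower_mechanicalWord_iff irrational_fibSlope fibSlope_pos.le
    fibSlope_lt_one.le _ hk (by omega)]
  have hirr : Irrational ((k : ℝ) * goldenRat * n) :=
    (Real.goldenRatio_irrational.natCast_mul (by omega)).mul_natCast (by omega)
  have e : (k : ℝ) * (n * fibSlope) = ((2 * k * n : ℤ) : ℝ) - k * goldenRat * n := by
    rw [fibSlope]
    push_cast
    ring
  refine dvd_or_dvd_add_one_iff_of_dvd_add_add_one ⟨2 * n, ?_⟩
  rw [e, floor_intCast_sub_add_floor hirr]
  ring
end
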